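/- arXiv:1206.6083 — 2 statements merged into one kernel-verified Lean document; each statement's English description precedes it below -/
import Mathlib

section
/- Let Ω = (0,a) × (0,b) ⊂ ℝ² be an open rectangle, g > 0, H > 0, ρ₀₀ > 0, and ρ₀(z) = ρ₀₀·exp(−z/H). Suppose ρ, u, w, p : Ω × [0,T] → ℝ are continuously differentiable (up to the boundary), ρ > 0, they satisfy the 2D incompressible Euler equations ∂ₜρ + ∂ₓ(ρu) + ∂_z(ρw) = 0, ∂ₜ(ρu) + ∂ₓ(ρu²) + ∂_z(ρuw) = −∂ₓp, ∂ₜ(ρw) + ∂ₓ(ρuw) + ∂_z(ρw²) = −∂_z p − ρg, ∂ₓu + ∂_z w = 0, together with the no-flux boundary condition u = 0 on the vertical sides {x = 0, a} and w = 0 on the horizontal sides {z = 0, b}. Then the generalized wave-energy functional H_nonl(t) = ∫_Ω [ ρ(u² + w²)/2 + ρgz + gH( ρ·ln(ρ/ρ₀₀) + ρ₀(z) − ρ ) ] dx dz is constant in t on [0,T]. -/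
open MeasureTheory Set Function

/-!
Multiplying the mass equation by gz + gH log(ρ/ρ₀₀) − |v|²/2, the momentum equations by u
and w, and adding the incompressibility constraint times p − gHρ, gives the local
conservation law ∂ₜe + ∂ₓ(uψ) + ∂_z(wψ) = 0 for the energy density e, where ψ is e minus its
time-independent part gHρ₀(z), plus the pressure. Integrated over Ω, the flux term vanishes by
the divergence theorem and the no-flux boundary conditions, so the energy has zero time
derivative; differentiation under the integral sign is justified since ρ > 0 on a neighbourhood
of the compact set Ω̄ × [0, T], where all integrands are C¹.
-/

variable {E : Type*} [NormedAddCommGroup E] [NormedSpace ℝ E]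

theorem DifferentiableAt.hasDerivAt_slices {f : ℝ → ℝ → ℝ → E} {x z t : ℝ}
    (hf : DifferentiableAt ℝ ↿f (x, z, t)) :
    HasDerivAt (f · z t) (fderiv ℝ ↿f (x, z, t) (1, 0, 0)) x ∧
      HasDerivAt (f x · t) (fderiv ℝ ↿f (x, z, t) (0, 1, 0)) z ∧
      HasDerivAt (f x z ·) (fderiv ℝ ↿f (x, z, t) (0, 0, 1)) t :=
  ⟨hf.hasFDerivAt.comp_hasDerivAt (f := fun y => (y, z, t)) x
      ((hasDerivAt_id x).prodMk ((hasDerivAt_const x z).prodMk (hasDerivAt_const x t))),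
    hf.hasFDerivAt.comp_hasDerivAt (f := fun y => (x, y, t)) z
      ((hasDerivAt_const z x).prodMk ((hasDerivAt_id z).prodMk (hasDerivAt_const z t))),
    hf.hasFDerivAt.comp_hasDerivAt (f := fun s => (x, z, s)) t
      ((hasDerivAt_const t x).prodMk ((hasDerivAt_const t z).prodMk (hasDerivAt_id t)))⟩

theorem hasDerivAt_setIntegral_of_continuousOn {X : Type*} [TopologicalSpace X] [T2Space X]
    [SecondCountableTopology X] [MeasurableSpace X] [OpensMeasurableSpace X] {μ : Measure X}
    [IsFiniteMeasureOnCompacts μ]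
    {K s : Set X} (hK : IsCompact K) (hs : MeasurableSet s) (hsK : s ⊆ K)
    {f f' : X → ℝ → E} {U : Set (X × ℝ)} (hU : IsOpen U) {t₀ : ℝ} (hKU : K ×ˢ {t₀} ⊆ U)
    (hf : ContinuousOn (uncurry f) U) (hf' : ContinuousOn (uncurry f') U)
    (hderiv : ∀ p ∈ U, HasDerivAt (f p.1) (f' p.1 p.2) p.2) :
    HasDerivAt (fun t => ∫ x in s, f x t ∂μ) (∫ x in s, f' x t₀ ∂μ) t₀ := by
  obtain ⟨_, v, -, hv, hKu, ht₀v, huv⟩ := generalized_tube_lemma hK isCompact_singleton hU hKU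
  obtain ⟨ε, hε, hεv⟩ := Metric.nhds_basis_closedBall.mem_iff.1 (hv.mem_nhds (ht₀v rfl))
  have hKB : K ×ˢ Metric.closedBall t₀ ε ⊆ U := (prod_mono hKu hεv).trans huv
  have hslice : ∀ {φ : X → ℝ → E}, ContinuousOn (uncurry φ) U →
      ∀ t ∈ Metric.closedBall t₀ ε, ContinuousOn (φ · t) K := fun hφ t ht =>
    hφ.comp (continuous_id.prodMk continuous_const).continuousOn fun x hx => hKB ⟨hx, ht⟩
  have ht₀ : t₀ ∈ Metric.closedBall t₀ ε := Metric.mem_closedBall_self hε.le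
  obtain ⟨C, hC⟩ := (hK.prod (isCompact_closedBall t₀ ε)).exists_bound_of_continuousOn
    (hf'.mono hKB)
  refine (hasDerivAt_integral_of_dominated_loc_of_deriv_le (μ := μ.restrict s)
    (F := fun t x => f x t) (F' := fun t x => f' x t) (bound := fun _ => C)
    (Metric.ball_mem_nhds t₀ hε) ?_ ?_ ?_ ?_ ?_ ?_).2
  · filter_upwards [Metric.ball_mem_nhds t₀ hε] with t ht
    exact ((hslice hf t (Metric.ball_subset_closedBall ht)).mono hsK).aestronglyMeasurable hs
  · exact ((hslice hf t₀ ht₀).integrableOn_compact hK).mono_set hsK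
  · exact ((hslice hf' t₀ ht₀).mono hsK).aestronglyMeasurable hs
  · exact ae_restrict_of_forall_mem hs fun x hx t ht =>
      hC (x, t) ⟨hsK hx, Metric.ball_subset_closedBall ht⟩
  · exact integrableOn_const ((measure_mono hsK).trans_lt hK.measure_lt_top).ne
  · exact ae_restrict_of_forall_mem hs fun x hx t ht =>
      hderiv (x, t) (hKB ⟨hsK hx, Metric.ball_subset_closedBall ht⟩)

section Rectangle

variable {a b : ℝ}

theorem setIntegral_Ioo_prod_Ioo_divergence_eq_zero [CompleteSpace E] (ha : 0 ≤ a) (hb : 0 ≤ b)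
    {f g : ℝ × ℝ → E} {f' g' : ℝ × ℝ → ℝ × ℝ →L[ℝ] E}
    (hf : ∀ q ∈ Icc 0 a ×ˢ Icc 0 b, HasFDerivAt f (f' q) q)
    (hg : ∀ q ∈ Icc 0 a ×ˢ Icc 0 b, HasFDerivAt g (g' q) q)
    (hdiv_cont : ContinuousOn (fun q => f' q (1, 0) + g' q (0, 1)) (Icc 0 a ×ˢ Icc 0 b))
    (hf_bc : ∀ z ∈ Icc 0 b, f (0, z) = 0 ∧ f (a, z) = 0)
    (hg_bc : ∀ x ∈ Icc 0 a, g (x, 0) = 0 ∧ g (x, b) = 0) :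
    ∫ q in Ioo 0 a ×ˢ Ioo 0 b, (f' q (1, 0) + g' q (0, 1)) = 0 := by
  have hIcc : Icc ((0 : ℝ), (0 : ℝ)) (a, b) = Icc 0 a ×ˢ Icc 0 b := Icc_prod_eq _ _
  have hzero : ∀ {c d : ℝ} {φ : ℝ → E}, c ≤ d → (∀ y ∈ Icc c d, φ y = 0) →
      ∫ y in c..d, φ y = 0 := fun hcd hφ =>
    (intervalIntegral.integral_congr fun y hy => hφ y (by rwa [uIcc_of_le hcd] at hy)).trans
      intervalIntegral.integral_zero
  have hcont : ∀ {φ : ℝ × ℝ → E} {φ' : ℝ × ℝ → ℝ × ℝ →L[ℝ] E},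
      (∀ q ∈ Icc 0 a ×ˢ Icc 0 b, HasFDerivAt φ (φ' q) q) →
        ContinuousOn φ (Icc ((0 : ℝ), (0 : ℝ)) (a, b)) := fun hφ q hq =>
    (hφ q (hIcc ▸ hq)).continuousAt.continuousWithinAt
  have hIoo : Ioo 0 a ×ˢ Ioo 0 b ⊆ Icc 0 a ×ˢ Icc 0 b :=
    prod_mono Ioo_subset_Icc_self Ioo_subset_Icc_self
  rw [Measure.volume_eq_prod, Measure.restrict_congr_set
    (Measure.set_prod_ae_eq Ioo_ae_eq_Icc Ioo_ae_eq_Icc), ← Measure.volume_eq_prod, ← hIcc,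
    integral_divergence_prod_Icc_of_hasFDerivAt_of_le f g f' g' (0, 0) (a, b) ⟨ha, hb⟩
      (hcont hf) (hcont hg) (fun q hq => hf q (hIoo hq)) (fun q hq => hg q (hIoo hq))
      ((hIcc ▸ hdiv_cont).integrableOn_compact isCompact_Icc),
    hzero ha fun x hx => (hg_bc x hx).2, hzero ha fun x hx => (hg_bc x hx).1,
    hzero hb fun z hz => (hf_bc z hz).2, hzero hb fun z hz => (hf_bc z hz).1]
  simp

variable {U : Set (ℝ × ℝ × ℝ)}

theorem hasDerivAt_setIntegral_Ioo_prod_Ioo {t : ℝ} {e : ℝ → ℝ → ℝ → E} (hU : IsOpen U)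
    (hbox : Icc 0 a ×ˢ Icc 0 b ×ˢ {t} ⊆ U) (he : ContDiffOn ℝ 1 ↿e U) :
    HasDerivAt (fun s => ∫ q in Ioo 0 a ×ˢ Ioo 0 b, e q.1 q.2 s)
      (∫ q in Ioo 0 a ×ˢ Ioo 0 b, fderiv ℝ ↿e (q.1, q.2, t) (0, 0, 1)) t := by
  have hassoc : Continuous fun p : (ℝ × ℝ) × ℝ => (p.1.1, p.1.2, p.2) := by fun_prop
  exact hasDerivAt_setIntegral_of_continuousOn (isCompact_Icc.prod isCompact_Icc)
    (measurableSet_Ioo.prod measurableSet_Ioo) (prod_mono Ioo_subset_Icc_self Ioo_subset_Icc_self)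
    (f := fun q s => e q.1 q.2 s) (f' := fun q s => fderiv ℝ ↿e (q.1, q.2, s) (0, 0, 1))
    (hU.preimage hassoc) (fun p hp => hbox ⟨hp.1.1, hp.1.2, hp.2⟩)
    (he.continuousOn.comp hassoc.continuousOn fun _ hp => hp)
    (((he.continuousOn_fderiv_of_isOpen hU le_rfl).clm_apply continuousOn_const).comp
      hassoc.continuousOn fun _ hp => hp)
    (fun p hp => ((he.contDiffAt (hU.mem_nhds hp)).differentiableAt one_ne_zero
      |>.hasDerivAt_slices).2.2)

theorem setIntegral_Ioo_prod_Ioo_flux_eq_zero [CompleteSpace E] {t : ℝ} (ha : 0 ≤ a) (hb : 0 ≤ b)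
    {F G : ℝ → ℝ → ℝ → E} (hU : IsOpen U) (hbox : Icc 0 a ×ˢ Icc 0 b ×ˢ {t} ⊆ U)
    (hF : ContDiffOn ℝ 1 ↿F U) (hG : ContDiffOn ℝ 1 ↿G U)
    (hF_bc : ∀ z ∈ Icc 0 b, F 0 z t = 0 ∧ F a z t = 0)
    (hG_bc : ∀ x ∈ Icc 0 a, G x 0 t = 0 ∧ G x b t = 0) :
    ∫ q in Ioo 0 a ×ˢ Ioo 0 b,
      (fderiv ℝ ↿F (q.1, q.2, t) (1, 0, 0) + fderiv ℝ ↿G (q.1, q.2, t) (0, 1, 0)) = 0 := by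
  have hι : ∀ q : ℝ × ℝ, HasFDerivAt (fun q : ℝ × ℝ => (q.1, q.2, t))
      ((ContinuousLinearMap.fst ℝ ℝ ℝ).prod ((ContinuousLinearMap.snd ℝ ℝ ℝ).prod 0)) q :=
    fun q => hasFDerivAt_fst.prodMk (hasFDerivAt_snd.prodMk (hasFDerivAt_const t q))
  have hmem : ∀ q ∈ Icc 0 a ×ˢ Icc 0 b, (q.1, q.2, t) ∈ U := fun q hq => hbox ⟨hq.1, hq.2, rfl⟩
  have hdiff : ∀ {φ : ℝ → ℝ → ℝ → E}, ContDiffOn ℝ 1 ↿φ U → ∀ q ∈ U,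
      HasFDerivAt ↿φ (fderiv ℝ ↿φ q) q := fun hφ q hq =>
    ((hφ.contDiffAt (hU.mem_nhds hq)).differentiableAt one_ne_zero).hasFDerivAt
  have hcont : ∀ {φ : ℝ → ℝ → ℝ → E}, ContDiffOn ℝ 1 ↿φ U → ∀ v,
      ContinuousOn (fun q => fderiv ℝ ↿φ q v) U := fun hφ v =>
    (hφ.continuousOn_fderiv_of_isOpen hU le_rfl).clm_apply continuousOn_const
  exact setIntegral_Ioo_prod_Ioo_divergence_eq_zero ha hb
    (f := fun q => F q.1 q.2 t) (g := fun q => G q.1 q.2 t)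
    (fun q hq => ((hdiff hF _ (hmem q hq)).comp q (hι q) :))
    (fun q hq => ((hdiff hG _ (hmem q hq)).comp q (hι q) :))
    (((hcont hF _).add (hcont hG _)).comp
      (continuous_fst.prodMk (continuous_snd.prodMk continuous_const)).continuousOn hmem)
    hF_bc hG_bc

theorem setIntegral_Ioo_prod_Ioo_eq_of_conservation_law [CompleteSpace E] {T : ℝ}
    (ha : 0 ≤ a) (hb : 0 ≤ b) {e F G : ℝ → ℝ → ℝ → E} (hU : IsOpen U)
    (hbox : Icc 0 a ×ˢ Icc 0 b ×ˢ Icc 0 T ⊆ U)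
    (he : ContDiffOn ℝ 1 ↿e U) (hF : ContDiffOn ℝ 1 ↿F U) (hG : ContDiffOn ℝ 1 ↿G U)
    (hlaw : ∀ x ∈ Ioo 0 a, ∀ z ∈ Ioo 0 b, ∀ t ∈ Icc 0 T,
      deriv (e x z ·) t + deriv (F · z t) x + deriv (G x · t) z = 0)
    (hF_bc : ∀ z ∈ Icc 0 b, ∀ t ∈ Icc 0 T, F 0 z t = 0 ∧ F a z t = 0)
    (hG_bc : ∀ x ∈ Icc 0 a, ∀ t ∈ Icc 0 T, G x 0 t = 0 ∧ G x b t = 0) :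
    ∀ t ∈ Icc 0 T,
      ∫ q in Ioo 0 a ×ˢ Ioo 0 b, e q.1 q.2 t = ∫ q in Ioo 0 a ×ˢ Ioo 0 b, e q.1 q.2 0 := by
  have hderiv : ∀ t ∈ Icc 0 T,
      HasDerivAt (fun s => ∫ q in Ioo 0 a ×ˢ Ioo 0 b, e q.1 q.2 s) 0 t := by
    intro t ht
    have hbox_t : Icc 0 a ×ˢ Icc 0 b ×ˢ {t} ⊆ U := fun q ⟨hx, hz, hq⟩ =>
      hbox ⟨hx, hz, (mem_singleton_iff.1 hq) ▸ ht⟩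
    have hlaw_t : ∀ q ∈ Ioo 0 a ×ˢ Ioo 0 b, fderiv ℝ ↿e (q.1, q.2, t) (0, 0, 1) =
        -(fderiv ℝ ↿F (q.1, q.2, t) (1, 0, 0) + fderiv ℝ ↿G (q.1, q.2, t) (0, 1, 0)) := by
      rintro ⟨x, z⟩ ⟨hx, hz⟩
      have hq : (x, z, t) ∈ U := hbox ⟨Ioo_subset_Icc_self hx, Ioo_subset_Icc_self hz, ht⟩
      have hslices : ∀ {φ : ℝ → ℝ → ℝ → E}, ContDiffOn ℝ 1 ↿φ U → _ := fun hφ =>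
        ((hφ.contDiffAt (hU.mem_nhds hq)).differentiableAt one_ne_zero).hasDerivAt_slices
      rw [← (hslices he).2.2.deriv, ← (hslices hF).1.deriv, ← (hslices hG).2.1.deriv,
        eq_neg_iff_add_eq_zero, ← add_assoc]
      exact hlaw x hx z hz t ht
    have h := hasDerivAt_setIntegral_Ioo_prod_Ioo hU hbox_t he
    rwa [setIntegral_congr_fun (measurableSet_Ioo.prod measurableSet_Ioo) hlaw_t, integral_neg,
      setIntegral_Ioo_prod_Ioo_flux_eq_zero ha hb hU hbox_t hF hG (fun z hz => hF_bc z hz t ht)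
        (fun x hx => hG_bc x hx t ht), neg_zero] at h
  exact constant_of_has_deriv_right_zero
    (fun s hs => (hderiv s hs).continuousAt.continuousWithinAt)
    (fun s hs => (hderiv s (Ico_subset_Icc_self hs)).hasDerivWithinAt)

end Rectangle

theorem hasDerivAt_mul_log_div_const {r c : ℝ} (hr : r ≠ 0) (hc : c ≠ 0) :
    HasDerivAt (fun r => r * Real.log (r / c)) (Real.log (r / c) + 1) r := by
  refine ((hasDerivAt_id' r).fun_mul (((hasDerivAt_id' r).div_const c).log
    (div_ne_zero hr hc))).congr_deriv ?_
  field_simp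

noncomputable def waveEnergyDensity (g H ρ₀₀ : ℝ) (ρ u w : ℝ → ℝ → ℝ → ℝ) (x z t : ℝ) : ℝ :=
  ρ x z t * ((u x z t) ^ 2 + (w x z t) ^ 2) / 2 + ρ x z t * g * z
    + g * H * (ρ x z t * Real.log (ρ x z t / ρ₀₀) + ρ₀₀ * Real.exp (-z / H) - ρ x z t)

noncomputable def waveEnthalpy (g H ρ₀₀ : ℝ) (ρ u w p : ℝ → ℝ → ℝ → ℝ) (x z t : ℝ) : ℝ :=
  ρ x z t * ((u x z t) ^ 2 + (w x z t) ^ 2) / 2 + ρ x z t * g * z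
    + g * H * (ρ x z t * Real.log (ρ x z t / ρ₀₀) - ρ x z t) + p x z t

section WaveEnergy

variable {g H ρ₀₀ : ℝ} {ρ u w p : ℝ → ℝ → ℝ → ℝ}

theorem contDiffOn_waveEnergyDensity {n : WithTop ℕ∞} {s : Set (ℝ × ℝ × ℝ)} (hρ₀₀ : ρ₀₀ ≠ 0)
    (hρ : ContDiffOn ℝ n ↿ρ s) (hu : ContDiffOn ℝ n ↿u s) (hw : ContDiffOn ℝ n ↿w s)
    (hρ0 : ∀ q ∈ s, ↿ρ q ≠ 0) :
    ContDiffOn ℝ n ↿(waveEnergyDensity g H ρ₀₀ ρ u w) s := by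
  have hρ' : ContDiffOn ℝ n (fun q : ℝ × ℝ × ℝ => ρ q.1 q.2.1 q.2.2) s := hρ
  have hu' : ContDiffOn ℝ n (fun q : ℝ × ℝ × ℝ => u q.1 q.2.1 q.2.2) s := hu
  have hw' : ContDiffOn ℝ n (fun q : ℝ × ℝ × ℝ => w q.1 q.2.1 q.2.2) s := hw
  unfold waveEnergyDensity
  fun_prop (disch := exact fun q hq => div_ne_zero (hρ0 q hq) hρ₀₀)

theorem contDiffOn_waveEnthalpy {n : WithTop ℕ∞} {s : Set (ℝ × ℝ × ℝ)} (hρ₀₀ : ρ₀₀ ≠ 0)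
    (hρ : ContDiffOn ℝ n ↿ρ s) (hu : ContDiffOn ℝ n ↿u s) (hw : ContDiffOn ℝ n ↿w s)
    (hp : ContDiffOn ℝ n ↿p s) (hρ0 : ∀ q ∈ s, ↿ρ q ≠ 0) :
    ContDiffOn ℝ n ↿(waveEnthalpy g H ρ₀₀ ρ u w p) s := by
  have hρ' : ContDiffOn ℝ n (fun q : ℝ × ℝ × ℝ => ρ q.1 q.2.1 q.2.2) s := hρ
  have hu' : ContDiffOn ℝ n (fun q : ℝ × ℝ × ℝ => u q.1 q.2.1 q.2.2) s := hu
  have hw' : ContDiffOn ℝ n (fun q : ℝ × ℝ × ℝ => w q.1 q.2.1 q.2.2) s := hw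
  have hp' : ContDiffOn ℝ n (fun q : ℝ × ℝ × ℝ => p q.1 q.2.1 q.2.2) s := hp
  unfold waveEnthalpy
  fun_prop (disch := exact fun q hq => div_ne_zero (hρ0 q hq) hρ₀₀)

theorem waveEnergy_local_conservation (hρ₀₀ : ρ₀₀ ≠ 0) {x z t : ℝ}
    (hρ : DifferentiableAt ℝ ↿ρ (x, z, t)) (hu : DifferentiableAt ℝ ↿u (x, z, t))
    (hw : DifferentiableAt ℝ ↿w (x, z, t)) (hp : DifferentiableAt ℝ ↿p (x, z, t))
    (hρ0 : ρ x z t ≠ 0)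
    (hmass : deriv (fun s => ρ x z s) t
        + deriv (fun y => ρ y z t * u y z t) x
        + deriv (fun y => ρ x y t * w x y t) z = 0)
    (hmomx : deriv (fun s => ρ x z s * u x z s) t
        + deriv (fun y => ρ y z t * (u y z t) ^ 2) x
        + deriv (fun y => ρ x y t * u x y t * w x y t) z
        = -deriv (fun y => p y z t) x)
    (hmomz : deriv (fun s => ρ x z s * w x z s) t
        + deriv (fun y => ρ y z t * u y z t * w y z t) x
        + deriv (fun y => ρ x y t * (w x y t) ^ 2) z
        = -deriv (fun y => p x y t) z - ρ x z t * g)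
    (hdiv : deriv (fun y => u y z t) x + deriv (fun y => w x y t) z = 0) :
    deriv (waveEnergyDensity g H ρ₀₀ ρ u w x z ·) t
      + deriv (fun y => u y z t * waveEnthalpy g H ρ₀₀ ρ u w p y z t) x
      + deriv (fun y => w x y t * waveEnthalpy g H ρ₀₀ ρ u w p x y t) z = 0 := by
  obtain ⟨hρx, hρz, hρt⟩ := hρ.hasDerivAt_slices
  obtain ⟨hux, huz, hut⟩ := hu.hasDerivAt_slices
  obtain ⟨hwx, hwz, hwt⟩ := hw.hasDerivAt_slices
  obtain ⟨hpx, hpz, -⟩ := hp.hasDerivAt_slices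
  have hlog := hasDerivAt_mul_log_div_const hρ0 hρ₀₀
  have het : HasDerivAt (waveEnergyDensity g H ρ₀₀ ρ u w x z ·) _ t :=
    (((hρt.fun_mul ((hut.fun_pow 2).fun_add (hwt.fun_pow 2))).div_const 2).fun_add
      ((hρt.mul_const g).mul_const z)).fun_add
      ((((hlog.comp t hρt).fun_add (hasDerivAt_const t _)).fun_sub hρt).const_mul (g * H))
  have hψx : HasDerivAt (waveEnthalpy g H ρ₀₀ ρ u w p · z t) _ x :=
    ((((hρx.fun_mul ((hux.fun_pow 2).fun_add (hwx.fun_pow 2))).div_const 2).fun_add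
      ((hρx.mul_const g).mul_const z)).fun_add
      (((hlog.comp x hρx).fun_sub hρx).const_mul (g * H))).fun_add hpx
  have hψz : HasDerivAt (waveEnthalpy g H ρ₀₀ ρ u w p x · t) _ z :=
    ((((hρz.fun_mul ((huz.fun_pow 2).fun_add (hwz.fun_pow 2))).div_const 2).fun_add
      ((hρz.mul_const g).fun_mul (hasDerivAt_id' z))).fun_add
      (((hlog.comp z hρz).fun_sub hρz).const_mul (g * H))).fun_add hpz
  rw [hρt.deriv, (hρx.fun_mul hux).deriv, (hρz.fun_mul hwz).deriv] at hmass
  rw [(hρt.fun_mul hut).deriv, (hρx.fun_mul (hux.fun_pow 2)).deriv,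
    ((hρz.fun_mul huz).fun_mul hwz).deriv, hpx.deriv] at hmomx
  rw [(hρt.fun_mul hwt).deriv, ((hρx.fun_mul hux).fun_mul hwx).deriv,
    (hρz.fun_mul (hwz.fun_pow 2)).deriv, hpz.deriv] at hmomz
  rw [hux.deriv, hwz.deriv] at hdiv
  rw [het.deriv, (hux.fun_mul hψx).deriv, (hwz.fun_mul hψz).deriv]
  unfold waveEnthalpy
  linear_combination
    (g * z + g * H * Real.log (ρ x z t / ρ₀₀) - ((u x z t) ^ 2 + (w x z t) ^ 2) / 2) * hmass
    + u x z t * hmomx + w x z t * hmomz + (p x z t - g * H * ρ x z t) * hdiv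

end WaveEnergy

theorem generalized_wave_energy_conserved_general
    (a b T g H ρ₀₀ : ℝ) (ha : 0 < a) (hb : 0 < b)
    (hρ₀₀ : 0 < ρ₀₀)
    (ρ u w p : ℝ → ℝ → ℝ → ℝ)
    (hρC1 : ContDiff ℝ 1 fun q : ℝ × ℝ × ℝ => ρ q.1 q.2.1 q.2.2)
    (huC1 : ContDiff ℝ 1 fun q : ℝ × ℝ × ℝ => u q.1 q.2.1 q.2.2)
    (hwC1 : ContDiff ℝ 1 fun q : ℝ × ℝ × ℝ => w q.1 q.2.1 q.2.2)
    (hpC1 : ContDiff ℝ 1 fun q : ℝ × ℝ × ℝ => p q.1 q.2.1 q.2.2)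
    (hρpos : ∀ x ∈ Icc 0 a, ∀ z ∈ Icc 0 b, ∀ t ∈ Icc 0 T, 0 < ρ x z t)
    (hmass : ∀ x ∈ Ioo 0 a, ∀ z ∈ Ioo 0 b, ∀ t ∈ Icc 0 T,
      deriv (fun s => ρ x z s) t
        + deriv (fun y => ρ y z t * u y z t) x
        + deriv (fun y => ρ x y t * w x y t) z = 0)
    (hmomx : ∀ x ∈ Ioo 0 a, ∀ z ∈ Ioo 0 b, ∀ t ∈ Icc 0 T,
      deriv (fun s => ρ x z s * u x z s) t
        + deriv (fun y => ρ y z t * (u y z t) ^ 2) x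
        + deriv (fun y => ρ x y t * u x y t * w x y t) z
        = -deriv (fun y => p y z t) x)
    (hmomz : ∀ x ∈ Ioo 0 a, ∀ z ∈ Ioo 0 b, ∀ t ∈ Icc 0 T,
      deriv (fun s => ρ x z s * w x z s) t
        + deriv (fun y => ρ y z t * u y z t * w y z t) x
        + deriv (fun y => ρ x y t * (w x y t) ^ 2) z
        = -deriv (fun y => p x y t) z - ρ x z t * g)
    (hdiv : ∀ x ∈ Ioo 0 a, ∀ z ∈ Ioo 0 b, ∀ t ∈ Icc 0 T,
      deriv (fun y => u y z t) x + deriv (fun y => w x y t) z = 0)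
    (hbcx : ∀ z ∈ Icc 0 b, ∀ t ∈ Icc 0 T, u 0 z t = 0 ∧ u a z t = 0)
    (hbcz : ∀ x ∈ Icc 0 a, ∀ t ∈ Icc 0 T, w x 0 t = 0 ∧ w x b t = 0) :
    ∀ t ∈ Icc 0 T,
      (∫ q in Ioo (0 : ℝ) a ×ˢ Ioo (0 : ℝ) b,
        (ρ q.1 q.2 t * ((u q.1 q.2 t) ^ 2 + (w q.1 q.2 t) ^ 2) / 2
          + ρ q.1 q.2 t * g * q.2
          + g * H * (ρ q.1 q.2 t * Real.log (ρ q.1 q.2 t / ρ₀₀)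
              + ρ₀₀ * Real.exp (-q.2 / H) - ρ q.1 q.2 t)))
      = (∫ q in Ioo (0 : ℝ) a ×ˢ Ioo (0 : ℝ) b,
        (ρ q.1 q.2 0 * ((u q.1 q.2 0) ^ 2 + (w q.1 q.2 0) ^ 2) / 2
          + ρ q.1 q.2 0 * g * q.2
          + g * H * (ρ q.1 q.2 0 * Real.log (ρ q.1 q.2 0 / ρ₀₀)
              + ρ₀₀ * Real.exp (-q.2 / H) - ρ q.1 q.2 0))) := by
  have hU : IsOpen {q : ℝ × ℝ × ℝ | 0 < ↿ρ q} := isOpen_lt continuous_const hρC1.continuous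
  have hbox : Icc 0 a ×ˢ Icc 0 b ×ˢ Icc 0 T ⊆ {q | 0 < ↿ρ q} := fun q ⟨hx, hz, ht⟩ =>
    hρpos _ hx _ hz _ ht
  have hρ0 : ∀ q ∈ {q : ℝ × ℝ × ℝ | 0 < ↿ρ q}, ↿ρ q ≠ 0 := fun q hq => hq.ne'
  have hψ := contDiffOn_waveEnthalpy (g := g) (H := H) hρ₀₀.ne' hρC1.contDiffOn
    huC1.contDiffOn hwC1.contDiffOn hpC1.contDiffOn hρ0
  refine setIntegral_Ioo_prod_Ioo_eq_of_conservation_law (e := waveEnergyDensity g H ρ₀₀ ρ u w)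
    (F := fun x z t => u x z t * waveEnthalpy g H ρ₀₀ ρ u w p x z t)
    (G := fun x z t => w x z t * waveEnthalpy g H ρ₀₀ ρ u w p x z t) ha.le hb.le hU hbox
    (contDiffOn_waveEnergyDensity hρ₀₀.ne' hρC1.contDiffOn huC1.contDiffOn hwC1.contDiffOn hρ0)
    (huC1.contDiffOn.mul hψ) (hwC1.contDiffOn.mul hψ) (fun x hx z hz t ht => ?_)
    (fun z hz t ht => ?_) (fun x hx t ht => ?_)
  · have hdiff : ∀ {f : ℝ → ℝ → ℝ → ℝ}, ContDiff ℝ 1 ↿f → DifferentiableAt ℝ ↿f (x, z, t) :=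
      fun hf => hf.differentiable one_ne_zero _
    exact waveEnergy_local_conservation hρ₀₀.ne' (hdiff hρC1) (hdiff huC1) (hdiff hwC1)
      (hdiff hpC1) (hρpos x (Ioo_subset_Icc_self hx) z (Ioo_subset_Icc_self hz) t ht).ne'
      (hmass x hx z hz t ht) (hmomx x hx z hz t ht) (hmomz x hx z hz t ht) (hdiv x hx z hz t ht)
  · simp [hbcx z hz t ht]
  · simp [hbcz x hx t ht]

/-- For a C¹ (up to the boundary) positive solution of the 2D incompressible
stratified Euler equations on the rectangle Ω = (0,a) × (0,b) with no-flux boundary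
conditions, the generalized wave-energy functional
H_nonl(t) = ∫_Ω [ ρ(u²+w²)/2 + ρgz + gH(ρ·ln(ρ/ρ₀₀) + ρ₀(z) − ρ) ] dx dz
is constant in t on [0,T], where ρ₀(z) = ρ₀₀·exp(−z/H). -/
theorem generalized_wave_energy_conserved
    (a b T g H ρ₀₀ : ℝ) (ha : 0 < a) (hb : 0 < b) (hT : 0 < T)
    (hg : 0 < g) (hH : 0 < H) (hρ₀₀ : 0 < ρ₀₀)
    (ρ u w p : ℝ → ℝ → ℝ → ℝ)
    (hρC1 : ContDiff ℝ 1 fun q : ℝ × ℝ × ℝ => ρ q.1 q.2.1 q.2.2)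
    (huC1 : ContDiff ℝ 1 fun q : ℝ × ℝ × ℝ => u q.1 q.2.1 q.2.2)
    (hwC1 : ContDiff ℝ 1 fun q : ℝ × ℝ × ℝ => w q.1 q.2.1 q.2.2)
    (hpC1 : ContDiff ℝ 1 fun q : ℝ × ℝ × ℝ => p q.1 q.2.1 q.2.2)
    (hρpos : ∀ x ∈ Icc 0 a, ∀ z ∈ Icc 0 b, ∀ t ∈ Icc 0 T, 0 < ρ x z t)
    (hmass : ∀ x ∈ Ioo 0 a, ∀ z ∈ Ioo 0 b, ∀ t ∈ Icc 0 T,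
      deriv (fun s => ρ x z s) t
        + deriv (fun y => ρ y z t * u y z t) x
        + deriv (fun y => ρ x y t * w x y t) z = 0)
    (hmomx : ∀ x ∈ Ioo 0 a, ∀ z ∈ Ioo 0 b, ∀ t ∈ Icc 0 T,
      deriv (fun s => ρ x z s * u x z s) t
        + deriv (fun y => ρ y z t * (u y z t) ^ 2) x
        + deriv (fun y => ρ x y t * u x y t * w x y t) z
        = -deriv (fun y => p y z t) x)
    (hmomz : ∀ x ∈ Ioo 0 a, ∀ z ∈ Ioo 0 b, ∀ t ∈ Icc 0 T,
      deriv (fun s => ρ x z s * w x z s) t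
        + deriv (fun y => ρ y z t * u y z t * w y z t) x
        + deriv (fun y => ρ x y t * (w x y t) ^ 2) z
        = -deriv (fun y => p x y t) z - ρ x z t * g)
    (hdiv : ∀ x ∈ Ioo 0 a, ∀ z ∈ Ioo 0 b, ∀ t ∈ Icc 0 T,
      deriv (fun y => u y z t) x + deriv (fun y => w x y t) z = 0)
    (hbcx : ∀ z ∈ Icc 0 b, ∀ t ∈ Icc 0 T, u 0 z t = 0 ∧ u a z t = 0)
    (hbcz : ∀ x ∈ Icc 0 a, ∀ t ∈ Icc 0 T, w x 0 t = 0 ∧ w x b t = 0) :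
    ∀ t ∈ Icc 0 T,
      (∫ q in Ioo (0 : ℝ) a ×ˢ Ioo (0 : ℝ) b,
        (ρ q.1 q.2 t * ((u q.1 q.2 t) ^ 2 + (w q.1 q.2 t) ^ 2) / 2
          + ρ q.1 q.2 t * g * q.2
          + g * H * (ρ q.1 q.2 t * Real.log (ρ q.1 q.2 t / ρ₀₀)
              + ρ₀₀ * Real.exp (-q.2 / H) - ρ q.1 q.2 t)))
      = (∫ q in Ioo (0 : ℝ) a ×ˢ Ioo (0 : ℝ) b,
        (ρ q.1 q.2 0 * ((u q.1 q.2 0) ^ 2 + (w q.1 q.2 0) ^ 2) / 2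
          + ρ q.1 q.2 0 * g * q.2
          + g * H * (ρ q.1 q.2 0 * Real.log (ρ q.1 q.2 0 / ρ₀₀)
              + ρ₀₀ * Real.exp (-q.2 / H) - ρ q.1 q.2 0))) :=
  generalized_wave_energy_conserved_general a b T g H ρ₀₀ ha hb hρ₀₀ ρ u w p hρC1 huC1 hwC1 hpC1
    hρpos hmass hmomx hmomz hdiv hbcx hbcz
end

section
/- Let g > 0, H > 0, ρ₀₀ > 0. For every z ∈ ℝ and every ρ > 0, the potential-energy density a(ρ, z) = ρgz + gH( ρ·ln(ρ/ρ₀₀) + ρ₀₀·exp(−z/H) − ρ ) satisfies a(ρ, z) ≥ 0, with equality if and only if ρ = ρ₀₀·exp(−z/H). Consequently the full integrand ρ(u² + w²)/2 + a(ρ, z) of the generalized wave-energy functional is nonnegative whenever ρ > 0. -/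
/-!
Measuring log-density against the background profile ρ₀(z) = ρ₀₀ e^{-z/H}, i.e. using
log (ρ / ρ₀(z)) = log (ρ / ρ₀₀) + z / H, the gravitational term ρ g z is absorbed and the
potential-energy density becomes g H (ρ log (ρ / ρ₀) + ρ₀ - ρ) = g H ρ₀ · klFun (ρ / ρ₀).
The Kullback–Leibler function klFun x = x log x + 1 - x is nonnegative and vanishes only at x = 1.
-/

open Real InformationTheory

lemma mul_log_div_add_sub_eq_mul_klFun (x : ℝ) {y : ℝ} (hy : y ≠ 0) :
    x * log (x / y) + y - x = y * klFun (x / y) := by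
  rw [klFun_apply]
  field_simp

lemma mul_log_div_add_sub_nonneg {x y : ℝ} (hx : 0 ≤ x) (hy : 0 < y) :
    0 ≤ x * log (x / y) + y - x := by
  rw [mul_log_div_add_sub_eq_mul_klFun x hy.ne']
  exact mul_nonneg hy.le (klFun_nonneg (div_nonneg hx hy.le))

lemma mul_log_div_add_sub_eq_zero_iff {x y : ℝ} (hx : 0 ≤ x) (hy : 0 < y) :
    x * log (x / y) + y - x = 0 ↔ x = y := by
  rw [mul_log_div_add_sub_eq_mul_klFun x hy.ne', mul_eq_zero_iff_left hy.ne',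
    klFun_eq_zero_iff (div_nonneg hx hy.le), div_eq_one_iff_eq hy.ne']

lemma potential_energy_density_eq_log_div_background {g H ρ₀₀ ρ : ℝ} (z : ℝ) (hH : H ≠ 0) (hρ₀₀ : ρ₀₀ ≠ 0)
    (hρ : ρ ≠ 0) :
    ρ * g * z + g * H * (ρ * log (ρ / ρ₀₀) + ρ₀₀ * exp (-z / H) - ρ)
      = g * H * (ρ * log (ρ / (ρ₀₀ * exp (-z / H))) + ρ₀₀ * exp (-z / H) - ρ) := by
  rw [← div_div, log_div (div_ne_zero hρ hρ₀₀) (exp_ne_zero _), log_exp]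
  field_simp
  ring

/-- For g > 0, H > 0, ρ₀₀ > 0, every z ∈ ℝ and ρ > 0, the potential-energy
density a(ρ,z) = ρgz + gH(ρ·ln(ρ/ρ₀₀) + ρ₀₀·exp(−z/H) − ρ) is nonnegative, vanishing
iff ρ = ρ₀₀·exp(−z/H); consequently the full integrand ρ(u²+w²)/2 + a(ρ,z) of the
generalized wave-energy functional is nonnegative. -/
theorem potential_energy_density_nonneg
    (g H ρ₀₀ : ℝ) (hg : 0 < g) (hH : 0 < H) (hρ₀₀ : 0 < ρ₀₀)
    (z ρ : ℝ) (hρ : 0 < ρ) :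
    0 ≤ ρ * g * z + g * H * (ρ * Real.log (ρ / ρ₀₀) + ρ₀₀ * Real.exp (-z / H) - ρ)
    ∧ (ρ * g * z + g * H * (ρ * Real.log (ρ / ρ₀₀) + ρ₀₀ * Real.exp (-z / H) - ρ) = 0
        ↔ ρ = ρ₀₀ * Real.exp (-z / H))
    ∧ ∀ u w : ℝ,
        0 ≤ ρ * (u ^ 2 + w ^ 2) / 2
          + (ρ * g * z + g * H * (ρ * Real.log (ρ / ρ₀₀) + ρ₀₀ * Real.exp (-z / H) - ρ)) := by
  rw [potential_energy_density_eq_log_div_background z hH.ne' hρ₀₀.ne' hρ.ne']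
  set ρ₀ := ρ₀₀ * exp (-z / H)
  have hρ₀ : 0 < ρ₀ := mul_pos hρ₀₀ (exp_pos _)
  have hgH : 0 < g * H := mul_pos hg hH
  have hpot : 0 ≤ g * H * (ρ * log (ρ / ρ₀) + ρ₀ - ρ) :=
    mul_nonneg hgH.le (mul_log_div_add_sub_nonneg hρ.le hρ₀)
  refine ⟨hpot, ?_, fun u w ↦ add_nonneg (by positivity) hpot⟩
  rw [mul_eq_zero_iff_left hgH.ne']
  exact mul_log_div_add_sub_eq_zero_iff hρ.le hρ₀
end
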